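/- arXiv:2308.00549 — 2 statements merged into one kernel-verified Lean document; each statement's English description precedes it below -/
import Mathlib

section
/- Let U₁,…,U_d be independent Uniform(0,1) random variables, α₁,…,α_d > 0, and V_i = U_i^{1/α_i}. Then P(V₁ ≤ V₂ ≤ ⋯ ≤ V_d) = ∏_{i=1}^d α_i/(α₁ + ⋯ + α_i). -/
/-!
Write `K_i = U_i ^ (1 / β_i)` and `s = β_1 + ⋯ + β_n`. By induction on `n`, for `t ∈ (0, 1]`
the probability that `K_1 ≤ ⋯ ≤ K_n ≤ t` is `t ^ s * ∏ β_i / (β_1 + ⋯ + β_i)`. For the step,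
condition on the last coordinate `x = U_{n+1}`: the event becomes the same event for the first `n`
coordinates with bound `x ^ (1 / β_{n+1})`, provided `x ≤ t ^ β_{n+1}`. Integrating
`x ^ (s / β_{n+1})` over `(0, t ^ β_{n+1}]` gives `t ^ (s + β_{n+1}) * β_{n+1} / (s + β_{n+1})`,
which contributes the new factor. The theorem is the case `t = 1`.
-/

open MeasureTheory Set Finset
open scoped ProbabilityTheory

namespace Fin

variable {α : Type*} [Preorder α] {n : ℕ}

theorem monotone_snoc_iff {f : Fin n → α} {a : α} :
    Monotone (snoc f a : Fin (n + 1) → α) ↔ Monotone f ∧ ∀ i, f i ≤ a := by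
  refine ⟨fun h => ⟨fun i j hij => ?_, fun i => ?_⟩, fun ⟨hf, ha⟩ i j hij => ?_⟩
  · simpa using h (castSucc_le_castSucc_iff.mpr hij)
  · simpa using h (le_last i.castSucc)
  · induction j using lastCases with
    | last =>
      induction i using lastCases with
      | last => exact le_rfl
      | cast i => simpa using ha i
    | cast j =>
      induction i using lastCases with
      | last => exact absurd hij (not_le.mpr (castSucc_lt_last j))
      | cast i => simpa using hf (castSucc_le_castSucc_iff.mp hij)

theorem monotone_snoc_snoc_iff {f : Fin n → α} {a b : α} :
    Monotone (snoc (snoc f a) b : Fin (n + 2) → α) ↔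
      Monotone (snoc f a : Fin (n + 1) → α) ∧ a ≤ b := by
  rw [monotone_snoc_iff, forall_fin_succ', snoc_last]
  simp only [snoc_castSucc]
  exact ⟨fun ⟨h, _, hab⟩ => ⟨h, hab⟩, fun ⟨h, hab⟩ =>
    ⟨h, fun i => ((monotone_snoc_iff.mp h).2 i).trans hab, hab⟩⟩

theorem prod_snoc_div_sum_Iic {K : Type*} [Semifield K] (β : Fin n → K) (b : K) :
    ∏ i, (snoc β b : Fin (n + 1) → K) i / ∑ j ∈ Iic i, (snoc β b : Fin (n + 1) → K) j
      = (∏ i, β i / ∑ j ∈ Iic i, β j) * (b / (∑ i, β i + b)) := by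
  rw [prod_univ_castSucc, snoc_last, ← sum_snoc]
  congr 1
  · refine Finset.prod_congr rfl fun i _ => ?_
    rw [← map_castSuccEmb_Iic, sum_map]
    simp
  · congr 1
    exact Finset.sum_congr (by ext; simp [le_last]) fun _ _ => rfl

end Fin

theorem measurableSet_setOf_monotone {X ι α : Type*} [MeasurableSpace X] [Preorder ι]
    [Countable ι] [TopologicalSpace α] [MeasurableSpace α] [OpensMeasurableSpace α]
    [PartialOrder α] [OrderClosedTopology α] [SecondCountableTopology α] {f : X → ι → α}
    (hf : ∀ i, Measurable fun x => f x i) : MeasurableSet {x | Monotone (f x)} := by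
  simp only [Monotone, ofPred_forall]
  exact .iInter fun i => .iInter fun j => .iInter fun _ => measurableSet_le (hf i) (hf j)

theorem MeasureTheory.Measure.pi_fin_succ_apply_eq_lintegral_snoc {α : Type*}
    [MeasurableSpace α] {n : ℕ} (μ : Measure α) [SigmaFinite μ] {s : Set (Fin (n + 1) → α)}
    (hs : MeasurableSet s) :
    Measure.pi (fun _ => μ) s = ∫⁻ x, Measure.pi (fun _ => μ) {v | Fin.snoc v x ∈ s} ∂μ := by
  have he := (measurePreserving_piFinSuccAbove (fun _ : Fin (n + 1) => μ) (Fin.last n)).symm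
  rw [← he.measure_preimage hs.nullMeasurableSet, Measure.prod_apply (he.measurable hs)]
  simp only [MeasurableEquiv.piFinSuccAbove_symm_apply, Fin.insertNthEquiv, Equiv.coe_fn_mk,
    Fin.insertNth_last']
  rfl

theorem lintegral_Ioc_ofReal_rpow {p c : ℝ} (hp : -1 < p) (hc : 0 ≤ c) :
    ∫⁻ x in Ioc 0 c, ENNReal.ofReal (x ^ p) = ENNReal.ofReal (c ^ (p + 1) / (p + 1)) := by
  have hint : IntegrableOn (fun x : ℝ => x ^ p) (Ioc 0 c) :=
    (intervalIntegrable_iff_integrableOn_Ioc_of_le hc).mp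
      (intervalIntegral.intervalIntegrable_rpow' hp)
  have hnonneg : 0 ≤ᵐ[volume.restrict (Ioc 0 c)] fun x : ℝ => x ^ p :=
    (ae_restrict_mem measurableSet_Ioc).mono fun x hx => Real.rpow_nonneg hx.1.le p
  rw [← ofReal_integral_eq_lintegral_ofReal hint hnonneg, ← intervalIntegral.integral_of_le hc,
    integral_rpow (.inl hp), Real.zero_rpow (by linarith), sub_zero]

noncomputable def weightedKeys {n : ℕ} (β u : Fin n → ℝ) : Fin n → ℝ := fun i => u i ^ (1 / β i)

theorem weightedKeys_snoc {n : ℕ} (β v : Fin n → ℝ) (b x : ℝ) :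
    weightedKeys (Fin.snoc β b) (Fin.snoc v x) = Fin.snoc (weightedKeys β v) (x ^ (1 / b)) := by
  funext i
  induction i using Fin.lastCases <;> simp [weightedKeys]

theorem measurable_weightedKeys_apply {n : ℕ} (β : Fin n → ℝ) (i : Fin n) :
    Measurable fun u => weightedKeys β u i :=
  (measurable_pi_apply i).pow_const _

theorem measurableSet_monotone_snoc_weightedKeys {n : ℕ} (β : Fin n → ℝ) (t : ℝ) :
    MeasurableSet {u | Monotone (Fin.snoc (weightedKeys β u) t : Fin (n + 1) → ℝ)} := by
  refine measurableSet_setOf_monotone fun i => ?_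
  induction i using Fin.lastCases
  · simp
  · simpa using measurable_weightedKeys_apply β _

/-- `Monotone (Fin.snoc keys t)` says that the keys increase and are all at most `t`. -/
theorem pi_uniform_monotone_snoc_weightedKeys {n : ℕ} (β : Fin n → ℝ) (hβ : ∀ i, 0 < β i)
    {t : ℝ} (ht : t ∈ Set.Ioc 0 1) :
    Measure.pi (fun _ => volume.restrict (Set.Ioc (0 : ℝ) 1))
        {u | Monotone (Fin.snoc (weightedKeys β u) t : Fin (n + 1) → ℝ)}
      = ENNReal.ofReal (t ^ (∑ i, β i) * ∏ i, β i / ∑ j ∈ Iic i, β j) := by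
  induction n generalizing t with
  | zero =>
    have : {u | Monotone (Fin.snoc (weightedKeys β u) t : Fin 1 → ℝ)} = Set.univ :=
      Set.eq_univ_of_forall fun u =>
        Fin.monotone_snoc_iff.mpr ⟨fun i => i.elim0, fun i => i.elim0⟩
    simp [this]
  | succ n ih =>
    obtain ⟨β, b, rfl⟩ : ∃ β' b, β = Fin.snoc β' b := ⟨_, _, (Fin.snoc_init_self β).symm⟩
    have hβ' : ∀ i, 0 < β i := fun i => by simpa using hβ i.castSucc
    have hb : 0 < b := by simpa using hβ (Fin.last n)
    set μ := volume.restrict (Set.Ioc (0 : ℝ) 1)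
    set s := ∑ i, β i
    set C := ∏ i, β i / ∑ j ∈ Iic i, β j
    have hs : 0 ≤ s := sum_nonneg fun i _ => (hβ' i).le
    have hC : 0 ≤ C :=
      prod_nonneg fun i _ => div_nonneg (hβ' i).le (sum_nonneg fun j _ => (hβ' j).le)
    have hc : 0 ≤ t ^ b := Real.rpow_nonneg ht.1.le b
    have hslice : ∀ x ∈ Set.Ioc (0 : ℝ) 1,
        Measure.pi (fun _ => μ) {v | Fin.snoc v x ∈
            {u | Monotone (Fin.snoc (weightedKeys (Fin.snoc β b) u) t : Fin (n + 2) → ℝ)}}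
          = (Set.Ioc 0 (t ^ b)).indicator
              (fun x => ENNReal.ofReal (x ^ (s / b)) * ENNReal.ofReal C) x := by
      intro x hx
      have hxt : x ^ (1 / b) ≤ t ↔ x ≤ t ^ b := by
        rw [one_div]
        exact Real.rpow_inv_le_iff_of_pos hx.1.le ht.1.le hb
      simp only [Set.mem_ofPred_eq, weightedKeys_snoc, Fin.monotone_snoc_snoc_iff, hxt]
      by_cases hxc : x ≤ t ^ b
      · have hy : x ^ (1 / b) ∈ Set.Ioc (0 : ℝ) 1 := Set.mem_Ioc.mpr
          ⟨Real.rpow_pos_of_pos hx.1 _, Real.rpow_le_one hx.1.le hx.2 (by positivity)⟩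
        simp only [hxc, and_true]
        rw [ih _ hβ' hy, indicator_of_mem (Set.mem_Ioc.mpr ⟨hx.1, hxc⟩),
          ← Real.rpow_mul hx.1.le, ENNReal.ofReal_mul (Real.rpow_nonneg hx.1.le _),
          one_div_mul_eq_div]
      · simp only [hxc, and_false, Set.ofPred_false, measure_empty]
        exact (indicator_of_notMem (fun h => hxc h.2) _).symm
    rw [Measure.pi_fin_succ_apply_eq_lintegral_snoc μ
        (measurableSet_monotone_snoc_weightedKeys _ t),
      setLIntegral_congr_fun measurableSet_Ioc hslice, lintegral_indicator measurableSet_Ioc,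
      Measure.restrict_restrict measurableSet_Ioc, Set.Ioc_inter_Ioc, sup_idem,
      min_eq_left (Real.rpow_le_one ht.1.le ht.2 hb.le), lintegral_mul_const _ (by fun_prop),
      lintegral_Ioc_ofReal_rpow (neg_one_lt_zero.trans_le (by positivity)) hc,
      ← ENNReal.ofReal_mul (by positivity), Fin.prod_snoc_div_sum_Iic, Fin.sum_snoc]
    change _ = ENNReal.ofReal (t ^ (s + b) * (C * (b / (s + b))))
    have hpow : (t ^ b) ^ (s / b + 1) = t ^ (s + b) := by
      rw [← Real.rpow_mul ht.1.le]
      congr 1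
      field_simp
    rw [hpow]
    congr 1
    field_simp

theorem monotone_weightedKeys_ae_eq_snoc_one {n : ℕ} (β : Fin n → ℝ) (hβ : ∀ i, 0 ≤ β i) :
    {u | Monotone (weightedKeys β u)}
      =ᵐ[Measure.pi fun _ => volume.restrict (Set.Ioc (0 : ℝ) 1)]
        {u | Monotone (Fin.snoc (weightedKeys β u) 1 : Fin (n + 1) → ℝ)} := by
  have hbox : ∀ᵐ u ∂(Measure.pi fun _ : Fin n => volume.restrict (Set.Ioc (0 : ℝ) 1)),
      ∀ i, u i ∈ Set.Ioc 0 1 :=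
    ae_all_iff.mpr fun i =>
      Measure.tendsto_eval_ae_ae.eventually (ae_restrict_mem measurableSet_Ioc)
  filter_upwards [hbox] with u hu
  exact propext (Fin.monotone_snoc_iff.trans <| and_iff_left fun i =>
    Real.rpow_le_one (hu i).1.le (hu i).2 (one_div_nonneg.mpr (hβ i))).symm

theorem wrs_order_probability_general
    {Ω : Type*} [MeasureSpace Ω]
    {d : ℕ} (U : Fin d → Ω → ℝ) (hm : ∀ i, Measurable (U i))
    (hInd : ProbabilityTheory.iIndepFun U)
    (hUnif : ∀ i, (ℙ : Measure Ω).map (U i) = volume.restrict (Ioo (0 : ℝ) 1))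
    (α : Fin d → ℝ) (hα : ∀ i, 0 < α i) :
    ℙ {ω | ∀ i j : Fin d, i ≤ j → U i ω ^ (1 / α i) ≤ U j ω ^ (1 / α j)}
      = ENNReal.ofReal (∏ i, α i / ∑ j ∈ Finset.Iic i, α j) := by
  have hlaw : (ℙ : Measure Ω).map (fun ω i => U i ω)
      = Measure.pi fun _ => volume.restrict (Set.Ioc (0 : ℝ) 1) := by
    rw [hInd.map_fun_eq_pi_map fun i => (hm i).aemeasurable]
    congr with i : 1
    rw [hUnif i, Measure.restrict_congr_set Ioo_ae_eq_Ioc]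
  have hevent : {ω | ∀ i j : Fin d, i ≤ j → U i ω ^ (1 / α i) ≤ U j ω ^ (1 / α j)}
      = (fun ω i => U i ω) ⁻¹' {u | Monotone (weightedKeys α u)} := rfl
  rw [hevent, ← Measure.map_apply (measurable_pi_lambda _ hm)
      (measurableSet_setOf_monotone (measurable_weightedKeys_apply α)), hlaw,
    measure_congr (monotone_weightedKeys_ae_eq_snoc_one α fun i => (hα i).le),
    pi_uniform_monotone_snoc_weightedKeys α hα (Set.right_mem_Ioc.mpr one_pos), Real.one_rpow,
    one_mul]

/-- Efraimidis–Spirakis order identity: for independent `Uᵢ ~ Uniform(0,1)` and weights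
`αᵢ > 0`, the keys `Vᵢ = Uᵢ^{1/αᵢ}` satisfy
`P(V₁ ≤ V₂ ≤ ⋯ ≤ V_d) = ∏ᵢ αᵢ / (α₁ + ⋯ + αᵢ)`. -/
theorem wrs_order_probability
    {Ω : Type*} [MeasureSpace Ω] [IsProbabilityMeasure (ℙ : Measure Ω)]
    {d : ℕ} (U : Fin d → Ω → ℝ) (hm : ∀ i, Measurable (U i))
    (hInd : ProbabilityTheory.iIndepFun U)
    (hUnif : ∀ i, (ℙ : Measure Ω).map (U i) = volume.restrict (Ioo (0 : ℝ) 1))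
    (α : Fin d → ℝ) (hα : ∀ i, 0 < α i) :
    ℙ {ω | ∀ i j : Fin d, i ≤ j → U i ω ^ (1 / α i) ≤ U j ω ^ (1 / α j)}
      = ENNReal.ofReal (∏ i, α i / ∑ j ∈ Finset.Iic i, α j) :=
  wrs_order_probability_general U hm hInd hUnif α hα
end

section
/- Let U₁,…,U_d be independent Uniform(0,1) and α_i > 0. Then P(argmax_i U_i^{1/α_i} = j) = α_j / (α₁ + ⋯ + α_d) for each j, where the argmax is almost surely unique. -/
open MeasureTheory Set
open scoped ProbabilityTheory

/-!
The key `Vᵢ = Uᵢ^{1/αᵢ}` has distribution function `t ↦ t^{αᵢ}` on `[0, 1]` and no atoms, so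
ties between independent keys are null. Conditioning on `Vⱼ = Uⱼ^{1/αⱼ}` with `Uⱼ = s`, all other
keys lie below it with probability `∏_{i ≠ j} s^{αᵢ/αⱼ} = s^c`, `c = ∑_{i ≠ j} αᵢ/αⱼ`, and
`∫₀¹ s^c ds = 1/(c+1) = αⱼ / ∑ᵢ αᵢ`.
-/

/-- The Beta(β, 1) distribution. -/
noncomputable def uniformRpow (β : ℝ) : Measure ℝ :=
  (volume.restrict (Ioo (0 : ℝ) 1)).map (· ^ (1 / β))

theorem uniformRpow_Iio {β t : ℝ} (hβ : 0 < β) (ht₀ : 0 ≤ t) (ht₁ : t ≤ 1) :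
    uniformRpow β (Iio t) = ENNReal.ofReal (t ^ β) := by
  have hpre : (· ^ (1 / β)) ⁻¹' Iio t ∩ Ioo 0 1 = Ioo (0 : ℝ) (t ^ β) := by
    ext s
    simp only [mem_inter_iff, mem_preimage, mem_Iio, mem_Ioo, one_div]
    constructor
    · rintro ⟨hs, hs₀, -⟩
      exact ⟨hs₀, (Real.rpow_inv_lt_iff_of_pos hs₀.le ht₀ hβ).1 hs⟩
    · rintro ⟨hs₀, hs⟩
      exact ⟨(Real.rpow_inv_lt_iff_of_pos hs₀.le ht₀ hβ).2 hs, hs₀,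
        hs.trans_le (Real.rpow_le_one ht₀ ht₁ hβ.le)⟩
  rw [uniformRpow, Measure.map_apply (by fun_prop) measurableSet_Iio,
    Measure.restrict_apply' measurableSet_Ioo, hpre, Real.volume_Ioo, sub_zero]

theorem nullSingletonClass_uniformRpow {β : ℝ} (hβ : 0 < β) :
    NullSingletonClass (uniformRpow β) where
  measure_singleton c := by
    rw [uniformRpow, Measure.map_apply (by fun_prop) (measurableSet_singleton c),
      Measure.restrict_apply' measurableSet_Ioo]
    refine measure_mono_null ?_ (measure_singleton (c ^ β))
    rintro s ⟨hs, hs₀, -⟩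
    rw [mem_singleton_iff, ← mem_singleton_iff.1 hs, one_div,
      Real.rpow_inv_rpow hs₀.le hβ.ne']

theorem ProbabilityTheory.IndepFun.measure_eq_eq_zero {Ω : Type*} [MeasurableSpace Ω]
    {μ : Measure Ω} [IsFiniteMeasure μ] {X Y : Ω → ℝ} (hX : Measurable X) (hY : Measurable Y)
    (hXY : X ⟂ᵢ[μ] Y) [NullSingletonClass (μ.map X)] : μ {ω | X ω = Y ω} = 0 := by
  have hdiag : MeasurableSet {p : ℝ × ℝ | p.1 = p.2} := measurableSet_diagonal
  calc μ {ω | X ω = Y ω} = μ.map (fun ω ↦ (X ω, Y ω)) {p | p.1 = p.2} :=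
        (Measure.map_apply (hX.prodMk hY) hdiag).symm
    _ = ∫⁻ y, μ.map X {y} ∂μ.map Y := by
        rw [hXY.map_prod_eq_prod_map_map hX.aemeasurable hY.aemeasurable,
          Measure.prod_apply_symm hdiag]
        rfl
    _ = 0 := by simp

theorem MeasureTheory.Measure.pi_setOf_forall_ne_lt {n : ℕ} (ν : Fin (n + 1) → Measure ℝ)
    [∀ i, SigmaFinite (ν i)] (j : Fin (n + 1)) :
    Measure.pi ν {x | ∀ i, i ≠ j → x i < x j}
      = ∫⁻ t, ∏ k, ν (j.succAbove k) (Iio t) ∂ν j := by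
  set B : Set (ℝ × (Fin n → ℝ)) := {p | ∀ k, p.2 k < p.1}
  have hB : MeasurableSet B := by
    simp only [B, ofPred_forall]
    exact .iInter fun k ↦ measurableSet_lt (by fun_prop) (by fun_prop)
  have hpre : MeasurableEquiv.piFinSuccAbove (fun _ ↦ ℝ) j ⁻¹' B
      = {x | ∀ i, i ≠ j → x i < x j} := by
    ext x
    simp only [B, mem_preimage, MeasurableEquiv.piFinSuccAbove_apply, mem_ofPred_eq,
      Fin.insertNthEquiv, Fin.removeNth, Equiv.coe_fn_symm_mk]
    exact ⟨fun h i hij ↦ by obtain ⟨k, rfl⟩ := Fin.exists_succAbove_eq hij; exact h k,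
      fun h k ↦ h _ (Fin.succAbove_ne j k)⟩
  rw [← hpre, (measurePreserving_piFinSuccAbove ν j).measure_preimage hB.nullMeasurableSet,
    Measure.prod_apply hB]
  congr 1 with t
  have hslice : Prod.mk t ⁻¹' B = univ.pi fun _ ↦ Iio t := by
    ext y; simp [B]
  rw [hslice, Measure.pi_pi]

theorem lintegral_Ioo_rpow {c : ℝ} (hc : -1 < c) :
    ∫⁻ t in Ioo (0 : ℝ) 1, ENNReal.ofReal (t ^ c) = ENNReal.ofReal (1 / (c + 1)) := by
  have hint : IntegrableOn (fun t : ℝ ↦ t ^ c) (Ioo 0 1) := by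
    have h := intervalIntegral.intervalIntegrable_rpow' (a := 0) (b := 1) hc
    rw [intervalIntegrable_iff, uIoc_of_le zero_le_one] at h
    exact h.mono_set Ioo_subset_Ioc_self
  rw [← ofReal_integral_eq_lintegral_ofReal hint
    (ae_restrict_of_forall_mem measurableSet_Ioo fun t ht ↦ Real.rpow_nonneg ht.1.le c),
    ← integral_Ioc_eq_integral_Ioo, ← intervalIntegral.integral_of_le zero_le_one,
    integral_rpow (.inl hc), Real.one_rpow, Real.zero_rpow (by linarith), sub_zero]

theorem lintegral_uniformRpow_prod_Iio {n : ℕ} (α : Fin (n + 1) → ℝ) (hα : ∀ i, 0 < α i)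
    (j : Fin (n + 1)) :
    ∫⁻ t, ∏ k, uniformRpow (α (j.succAbove k)) (Iio t) ∂uniformRpow (α j)
      = ENNReal.ofReal (α j / ∑ i, α i) := by
  set c := ∑ k, α (j.succAbove k) / α j
  have hc : 0 ≤ c := Finset.sum_nonneg fun k _ ↦ (div_pos (hα _) (hα j)).le
  have hmeas : Measurable fun t : ℝ ↦ ∏ k, uniformRpow (α (j.succAbove k)) (Iio t) :=
    Finset.measurable_prod _ fun k _ ↦
      Monotone.measurable fun _ _ hst ↦ measure_mono (Iio_subset_Iio hst)
  have hkey : ∀ s ∈ Ioo (0 : ℝ) 1,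
      ∏ k, uniformRpow (α (j.succAbove k)) (Iio (s ^ (1 / α j))) = ENNReal.ofReal (s ^ c) := by
    intro s ⟨hs₀, hs₁⟩
    have hkey₀ : 0 ≤ s ^ (1 / α j) := Real.rpow_nonneg hs₀.le _
    have hkey₁ : s ^ (1 / α j) ≤ 1 :=
      Real.rpow_le_one hs₀.le hs₁.le (one_div_nonneg.2 (hα j).le)
    simp_rw [uniformRpow_Iio (hα _) hkey₀ hkey₁, ← Real.rpow_mul hs₀.le, one_div_mul_eq_div]
    rw [← ENNReal.ofReal_prod_of_nonneg fun k _ ↦ Real.rpow_nonneg hs₀.le _,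
      Real.rpow_sum_of_pos hs₀]
  have hsum : c + 1 = (∑ i, α i) / α j := by
    rw [Fin.sum_univ_succAbove α j, add_div, div_self (hα j).ne', Finset.sum_div, add_comm]
  rw [uniformRpow, lintegral_map hmeas (by fun_prop),
    setLIntegral_congr_fun measurableSet_Ioo hkey, lintegral_Ioo_rpow (by linarith), hsum,
    one_div_div]

/-- For independent `Uᵢ ~ Uniform(0,1)` and weights `αᵢ > 0`, the argmax of the keys
`Vᵢ = Uᵢ^{1/αᵢ}` is almost surely unique, and equals `j` with probability
`αⱼ / (α₁ + ⋯ + α_d)`. -/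
theorem wrs_argmax_probability
    {Ω : Type*} [MeasureSpace Ω] [IsProbabilityMeasure (ℙ : Measure Ω)]
    {d : ℕ} (U : Fin d → Ω → ℝ) (hm : ∀ i, Measurable (U i))
    (hInd : ProbabilityTheory.iIndepFun U)
    (hUnif : ∀ i, (ℙ : Measure Ω).map (U i) = volume.restrict (Ioo (0 : ℝ) 1))
    (α : Fin d → ℝ) (hα : ∀ i, 0 < α i) :
    (ℙ {ω | ∃ i j : Fin d, i ≠ j ∧ U i ω ^ (1 / α i) = U j ω ^ (1 / α j)} = 0) ∧
    ∀ j : Fin d,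
      ℙ {ω | ∀ i : Fin d, i ≠ j → U i ω ^ (1 / α i) < U j ω ^ (1 / α j)}
        = ENNReal.ofReal (α j / ∑ i, α i) := by
  set V : Fin d → Ω → ℝ := fun i ω ↦ U i ω ^ (1 / α i)
  have hVm : ∀ i, Measurable (V i) := fun i ↦ (hm i).pow_const _
  have hVind : ProbabilityTheory.iIndepFun V :=
    hInd.comp (fun i x ↦ x ^ (1 / α i)) fun i ↦ by fun_prop
  have hVlaw : ∀ i, (ℙ : Measure Ω).map (V i) = uniformRpow (α i) := fun i ↦ by
    rw [uniformRpow, ← hUnif i, Measure.map_map (by fun_prop) (hm i)]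
    rfl
  constructor
  · simp only [ofPred_exists, measure_iUnion_null_iff]
    intro i j
    by_cases hij : i = j
    · simp [hij]
    · have : NullSingletonClass ((ℙ : Measure Ω).map (V i)) :=
        hVlaw i ▸ nullSingletonClass_uniformRpow (hα i)
      exact measure_mono_null (fun ω h ↦ h.2)
        ((hVind.indepFun hij).measure_eq_eq_zero (hVm i) (hVm j))
  · intro j
    obtain ⟨n, rfl⟩ : ∃ n, d = n + 1 := ⟨d - 1, (Nat.succ_pred_eq_of_pos j.pos).symm⟩
    have hS : MeasurableSet {x : Fin (n + 1) → ℝ | ∀ i, i ≠ j → x i < x j} := by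
      simp only [ofPred_forall]
      exact .iInter fun i ↦ .iInter fun _ ↦ measurableSet_lt (by fun_prop) (by fun_prop)
    calc ℙ {ω | ∀ i, i ≠ j → V i ω < V j ω}
        = (ℙ : Measure Ω).map (fun ω i ↦ V i ω) {x | ∀ i, i ≠ j → x i < x j} :=
          (Measure.map_apply (measurable_pi_iff.2 hVm) hS).symm
      _ = ∫⁻ t, ∏ k, uniformRpow (α (j.succAbove k)) (Iio t) ∂uniformRpow (α j) := by
          rw [hVind.map_fun_eq_pi_map fun i ↦ (hVm i).aemeasurable,
            Measure.pi_setOf_forall_ne_lt]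
          simp only [hVlaw]
      _ = ENNReal.ofReal (α j / ∑ i, α i) := lintegral_uniformRpow_prod_Iio α hα j
end
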